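/- arXiv:2008.00560 — 4 statements merged into one kernel-verified Lean document; each statement's English description precedes it below -/
import Mathlib

section
/- Let (A,∗) be a weakly associative algebra over a field K of characteristic 0, and let (A, •, [ , ]) be its polarization, i.e. X•Y = (X∗Y + Y∗X)/2 and [X,Y] = (X∗Y − Y∗X)/2. Then (A, •, [ , ]) is a nonassociative Poisson algebra: • is commutative, [ , ] is a Lie bracket, and the Leibniz identity [X•Y,Z] = X•[Y,Z] + [X,Z]•Y holds for all X,Y,Z ∈ A. -/
/-!
Write `W` for the weak associator `A(X,Y,Z) + A(Y,Z,X) - A(Y,X,Z)`. For any bilinear product, the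
Jacobiator of the commutator and the defect of the Leibniz rule for the commutator and
anticommutator are integer combinations of values of `W` (all signed permutations of the
associator appear), so both vanish when `W` does; the factors `1/2` only rescale them.
-/

namespace LinearMap

variable {R M : Type*} [CommRing R] [AddCommGroup M] [Module R M] (μ : M →ₗ[R] M →ₗ[R] M)

/-- `X(YZ) - (XY)Z`: the opposite sign to Mathlib's ring `associator`. -/
def associator (X Y Z : M) : M := μ X (μ Y Z) - μ (μ X Y) Z

def weakAssociator (X Y Z : M) : M :=
  μ.associator X Y Z + μ.associator Y Z X - μ.associator Y X Z

def IsWeaklyAssociative : Prop := ∀ X Y Z : M, μ.weakAssociator X Y Z = 0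

theorem jacobiator_commutator (X Y Z : M) :
    (μ - μ.flip) ((μ - μ.flip) X Y) Z + (μ - μ.flip) ((μ - μ.flip) Y Z) X
      + (μ - μ.flip) ((μ - μ.flip) Z X) Y
      = μ.weakAssociator X Z Y - μ.weakAssociator X Y Z := by
  simp only [weakAssociator, associator, sub_apply, flip_apply, map_sub]
  abel

theorem leibnizator_commutator_anticommutator (X Y Z : M) :
    (μ - μ.flip) ((μ + μ.flip) X Y) Z - (μ + μ.flip) X ((μ - μ.flip) Y Z)
      - (μ + μ.flip) ((μ - μ.flip) X Z) Y
      = μ.weakAssociator X Y Z - μ.weakAssociator X Z Y - 2 • μ.weakAssociator Z X Y := by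
  simp only [weakAssociator, associator, add_apply, sub_apply, flip_apply, map_add, map_sub]
  abel

variable {μ}

theorem IsWeaklyAssociative.jacobi (h : μ.IsWeaklyAssociative) (s : R) (X Y Z : M) :
    (s • (μ - μ.flip)) ((s • (μ - μ.flip)) X Y) Z + (s • (μ - μ.flip)) ((s • (μ - μ.flip)) Y Z) X
      + (s • (μ - μ.flip)) ((s • (μ - μ.flip)) Z X) Y = 0 := by
  simp only [smul_apply, map_smul, ← smul_add, jacobiator_commutator, h _, sub_zero, smul_zero]

theorem IsWeaklyAssociative.leibniz (h : μ.IsWeaklyAssociative) (r s : R) (X Y Z : M) :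
    (s • (μ - μ.flip)) ((r • (μ + μ.flip)) X Y) Z
      = (r • (μ + μ.flip)) X ((s • (μ - μ.flip)) Y Z)
        + (r • (μ + μ.flip)) ((s • (μ - μ.flip)) X Z) Y := by
  rw [← sub_eq_zero]
  simp only [smul_apply, map_smul, smul_comm s r, sub_add_eq_sub_sub, ← smul_sub,
    leibnizator_commutator_anticommutator, h _, sub_zero, smul_zero]

end LinearMap

theorem stmt_3_general {K A : Type*} [Field K] [AddCommGroup A] [Module K A]
    (star : A →ₗ[K] A →ₗ[K] A)
    (hWA : ∀ X Y Z : A,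
      (star X (star Y Z) - star (star X Y) Z)
        + (star Y (star Z X) - star (star Y Z) X)
        - (star Y (star X Z) - star (star Y X) Z) = 0)
    (dot br : A → A → A)
    (hdot : ∀ X Y : A, dot X Y = (2 : K)⁻¹ • (star X Y + star Y X))
    (hbr : ∀ X Y : A, br X Y = (2 : K)⁻¹ • (star X Y - star Y X)) :
    (∀ X Y : A, dot X Y = dot Y X) ∧
    (∀ X Y : A, br X Y = - br Y X) ∧
    (∀ X Y Z : A, br (br X Y) Z + br (br Y Z) X + br (br Z X) Y = 0) ∧
    (∀ X Y Z : A, br (dot X Y) Z = dot X (br Y Z) + dot (br X Z) Y) := by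
  have hWA' : star.IsWeaklyAssociative := hWA
  obtain rfl : dot = fun X Y ↦ ((2 : K)⁻¹ • (star + star.flip)) X Y := by
    funext X Y; simp [hdot]
  obtain rfl : br = fun X Y ↦ ((2 : K)⁻¹ • (star - star.flip)) X Y := by
    funext X Y; simp [hbr]
  refine ⟨fun X Y ↦ ?_, fun X Y ↦ ?_, hWA'.jacobi _, hWA'.leibniz _ _⟩
  · simp only [LinearMap.smul_apply, LinearMap.add_apply, LinearMap.flip_apply, add_comm]
  · simp only [LinearMap.smul_apply, LinearMap.sub_apply, LinearMap.flip_apply, ← smul_neg,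
      neg_sub]

/-- The polarization of a weakly associative algebra is a nonassociative Poisson algebra. -/
theorem stmt_3 {K A : Type*} [Field K] [CharZero K] [AddCommGroup A] [Module K A]
    (star : A →ₗ[K] A →ₗ[K] A)
    (hWA : ∀ X Y Z : A,
      (star X (star Y Z) - star (star X Y) Z)
        + (star Y (star Z X) - star (star Y Z) X)
        - (star Y (star X Z) - star (star Y X) Z) = 0)
    (dot br : A → A → A)
    (hdot : ∀ X Y : A, dot X Y = (2 : K)⁻¹ • (star X Y + star Y X))
    (hbr : ∀ X Y : A, br X Y = (2 : K)⁻¹ • (star X Y - star Y X)) :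
    (∀ X Y : A, dot X Y = dot Y X) ∧
    (∀ X Y : A, br X Y = - br Y X) ∧
    (∀ X Y Z : A, br (br X Y) Z + br (br Y Z) X + br (br Z X) Y = 0) ∧
    (∀ X Y Z : A, br (dot X Y) Z = dot X (br Y Z) + dot (br X Z) Y) :=
  stmt_3_general star hWA dot br hdot hbr
end

section
/- Let (A,∗) be a symmetric Leibniz algebra over a field K of characteristic 0 with polarization X•Y = (X∗Y + Y∗X)/2 and [X,Y] = (X∗Y − Y∗X)/2. Then [X, Y•Z] = 0 for all X,Y,Z ∈ A. -/
/-! The left Leibniz identity for `Y ∗ (Z ∗ X)` and for `Z ∗ (Y ∗ X)` together give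
`(Y ∗ Z + Z ∗ Y) ∗ X = 0`; the right Leibniz identity gives `X ∗ (Y ∗ Z + Z ∗ Y) = 0` in the
same way. Since `2 (Y • Z) = Y ∗ Z + Z ∗ Y`, both products in `2 [X, Y • Z]` vanish. -/

section LeibnizAnticommutator

variable {R A : Type*} [CommSemiring R] [AddCommGroup A] [Module R A]
  (mul : A →ₗ[R] A →ₗ[R] A)

theorem mul_add_mul_swap_mul_eq_zero_of_left_leibniz
    (hL : ∀ X Y Z : A, mul X (mul Y Z) = mul (mul X Y) Z + mul Y (mul X Z)) (X Y Z : A) :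
    mul (mul Y Z + mul Z Y) X = 0 := by
  have h := hL Y Z X
  rw [hL Z Y X, ← add_assoc] at h
  rw [map_add, LinearMap.add_apply]
  exact add_eq_right.mp h.symm

theorem mul_mul_add_mul_swap_eq_zero_of_right_leibniz
    (hR : ∀ X Y Z : A, mul (mul Y Z) X = mul (mul Y X) Z + mul Y (mul Z X)) (X Y Z : A) :
    mul X (mul Y Z + mul Z Y) = 0 := by
  have h := hR Y X Z
  rw [hR Z X Y, add_assoc] at h
  rw [map_add]
  exact left_eq_add.mp h

end LeibnizAnticommutator

theorem stmt_11_general {K A : Type*} [Field K] [AddCommGroup A] [Module K A]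
    (mul : A →ₗ[K] A →ₗ[K] A)
    (hL1 : ∀ X Y Z : A, mul X (mul Y Z) = mul (mul X Y) Z + mul Y (mul X Z))
    (hL2 : ∀ X Y Z : A, mul (mul Y Z) X = mul (mul Y X) Z + mul Y (mul Z X))
    (dot br : A → A → A)
    (hdot : ∀ X Y : A, dot X Y = (2 : K)⁻¹ • (mul X Y + mul Y X))
    (hbr : ∀ X Y : A, br X Y = (2 : K)⁻¹ • (mul X Y - mul Y X)) :
    ∀ X Y Z : A, br X (dot Y Z) = 0 := by
  intro X Y Z
  rw [hbr, hdot, map_smul, LinearMap.map_smul₂,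
    mul_mul_add_mul_swap_eq_zero_of_right_leibniz mul hL2,
    mul_add_mul_swap_mul_eq_zero_of_left_leibniz mul hL1, smul_zero, sub_zero, smul_zero]

/-- For a symmetric Leibniz algebra with polarization `(•, [ , ])`, one has
`[X, Y • Z] = 0` for all `X, Y, Z`. -/
theorem stmt_11 {K A : Type*} [Field K] [CharZero K] [AddCommGroup A] [Module K A]
    (mul : A →ₗ[K] A →ₗ[K] A)
    (hL1 : ∀ X Y Z : A, mul X (mul Y Z) = mul (mul X Y) Z + mul Y (mul X Z))
    (hL2 : ∀ X Y Z : A, mul (mul Y Z) X = mul (mul Y X) Z + mul Y (mul Z X))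
    (dot br : A → A → A)
    (hdot : ∀ X Y : A, dot X Y = (2 : K)⁻¹ • (mul X Y + mul Y X))
    (hbr : ∀ X Y : A, br X Y = (2 : K)⁻¹ • (mul X Y - mul Y X)) :
    ∀ X Y Z : A, br X (dot Y Z) = 0 :=
  stmt_11_general mul hL1 hL2 dot br hdot hbr
end

section
/- Let A be a K-vector space over a field K of characteristic 0 with a bilinear multiplication ∗, and let X•Y = (X∗Y + Y∗X)/2 and [X,Y] = (X∗Y − Y∗X)/2 be its polarization. Then (A,∗) is a symmetric Leibniz algebra if and only if the following conditions hold for all X,Y,Z ∈ A: (1) X•(Y•Z) = 0; (2) [ , ] satisfies the Jacobi identity; (3) [X, Y•Z] = 0 and X•[Y,Z] = 0. -/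
/-!
Write `X ∗ Y = X • Y + [X, Y]`. In a left (right) Leibniz algebra the symmetric products
`X ∗ Y + Y ∗ X` are left (right) annihilators, and adding the two Leibniz identities gives
`X ∗ (Y ∗ Z) + (Y ∗ Z) ∗ X = 0`; together these yield (1) and (3). Conversely, (1) and (3) alone
force every triple product to be an iterated bracket: `X ∗ (Y ∗ Z) = [X, [Y, Z]]` and
`(X ∗ Y) ∗ Z = [[X, Y], Z]`. So each Leibniz identity for `∗` is the same identity for the
antisymmetric bracket `[ , ]`, and for an antisymmetric bracket either one is the Jacobi identity.
-/

namespace LinearMap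

variable {K A : Type*} [Field K] [AddCommGroup A] [Module K A]

def IsLeftLeibniz (mul : A →ₗ[K] A →ₗ[K] A) : Prop :=
  ∀ X Y Z : A, mul X (mul Y Z) = mul (mul X Y) Z + mul Y (mul X Z)

def IsRightLeibniz (mul : A →ₗ[K] A →ₗ[K] A) : Prop :=
  ∀ X Y Z : A, mul (mul Y Z) X = mul (mul Y X) Z + mul Y (mul Z X)

def IsJacobi (br : A →ₗ[K] A →ₗ[K] A) : Prop :=
  ∀ X Y Z : A, br (br X Y) Z + br (br Y Z) X + br (br Z X) Y = 0

section Antisymmetric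

variable {br : A →ₗ[K] A →ₗ[K] A}

theorem isLeftLeibniz_iff_isJacobi (hbr : ∀ X Y : A, br Y X = -br X Y) :
    IsLeftLeibniz br ↔ IsJacobi br := by
  have e : ∀ X Y Z : A, br (br X Y) Z + br (br Y Z) X + br (br Z X) Y =
      -(br X (br Y Z) - (br (br X Y) Z + br Y (br X Z))) := by
    intro X Y Z
    rw [hbr X (br Y Z), hbr Y (br Z X), hbr X Z, map_neg, neg_neg]
    abel
  simp only [IsLeftLeibniz, IsJacobi, e, neg_eq_zero, sub_eq_zero]

theorem isRightLeibniz_iff_isJacobi (hbr : ∀ X Y : A, br Y X = -br X Y) :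
    IsRightLeibniz br ↔ IsJacobi br := by
  have e : ∀ X Y Z : A, br (br X Y) Z + br (br Y Z) X + br (br Z X) Y =
      br (br Y Z) X - (br (br Y X) Z + br Y (br Z X)) := by
    intro X Y Z
    rw [hbr X Y, hbr Y (br Z X), map_neg, LinearMap.neg_apply]
    abel
  simp only [IsRightLeibniz, IsJacobi, e, sub_eq_zero]

end Antisymmetric

section Leibniz

variable {mul : A →ₗ[K] A →ₗ[K] A}

theorem IsLeftLeibniz.add_mul_eq_zero (h : IsLeftLeibniz mul) (X Y Z : A) :
    mul (mul X Y + mul Y X) Z = 0 := by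
  rw [map_add, LinearMap.add_apply]
  linear_combination (norm := module) -h X Y Z - h Y X Z

theorem IsRightLeibniz.mul_add_eq_zero (h : IsRightLeibniz mul) (X Y Z : A) :
    mul X (mul Y Z + mul Z Y) = 0 := by
  rw [map_add]
  linear_combination (norm := module) -h Z X Y - h Y X Z

theorem mul_mul_add_mul_mul_eq_zero (hl : IsLeftLeibniz mul) (hr : IsRightLeibniz mul)
    (X Y Z : A) : mul X (mul Y Z) + mul (mul Y Z) X = 0 := by
  have hsq := hl.add_mul_eq_zero X Y Z
  have hsq' := hr.mul_add_eq_zero Y X Z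
  rw [map_add, LinearMap.add_apply] at hsq
  rw [map_add] at hsq'
  linear_combination (norm := module) hl X Y Z + hr X Y Z + hsq + hsq'

end Leibniz

variable (mul : A →ₗ[K] A →ₗ[K] A)

def symmProd : A →ₗ[K] A →ₗ[K] A := (2 : K)⁻¹ • (mul + mul.flip)

def skewProd : A →ₗ[K] A →ₗ[K] A := (2 : K)⁻¹ • (mul - mul.flip)

@[simp]
theorem symmProd_apply (X Y : A) : symmProd mul X Y = (2 : K)⁻¹ • (mul X Y + mul Y X) := rfl

@[simp]
theorem skewProd_apply (X Y : A) : skewProd mul X Y = (2 : K)⁻¹ • (mul X Y - mul Y X) := rfl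

theorem symmProd_comm (X Y : A) : symmProd mul Y X = symmProd mul X Y := by
  simp only [symmProd_apply, add_comm]

theorem skewProd_anticomm (X Y : A) : skewProd mul Y X = -skewProd mul X Y := by
  simp only [skewProd_apply, ← smul_neg, neg_sub]

theorem symmProd_add_skewProd [NeZero (2 : K)] (X Y : A) :
    symmProd mul X Y + skewProd mul X Y = mul X Y := by
  simp only [symmProd_apply, skewProd_apply, ← smul_add, add_add_sub_cancel, ← two_smul K,
    smul_smul, inv_mul_cancel₀ (two_ne_zero' K), one_smul]

theorem symmProd_sub_skewProd [NeZero (2 : K)] (X Y : A) :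
    symmProd mul X Y - skewProd mul X Y = mul Y X := by
  rw [← symmProd_comm, ← neg_neg (skewProd mul X Y), ← skewProd_anticomm, sub_neg_eq_add,
    symmProd_add_skewProd]

structure PolarVanishing : Prop where
  symmProd_symmProd : ∀ X Y Z : A, symmProd mul X (symmProd mul Y Z) = 0
  skewProd_symmProd : ∀ X Y Z : A, skewProd mul X (symmProd mul Y Z) = 0
  symmProd_skewProd : ∀ X Y Z : A, symmProd mul X (skewProd mul Y Z) = 0

variable {mul}

theorem IsLeftLeibniz.polarVanishing (hl : IsLeftLeibniz mul) (hr : IsRightLeibniz mul) :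
    PolarVanishing mul where
  symmProd_symmProd X Y Z := by
    simp only [symmProd_apply, map_smul, hl.add_mul_eq_zero, hr.mul_add_eq_zero, smul_zero,
      add_zero]
  skewProd_symmProd X Y Z := by
    simp only [skewProd_apply, symmProd_apply, map_smul, hl.add_mul_eq_zero, hr.mul_add_eq_zero,
      smul_zero, sub_zero]
  symmProd_skewProd X Y Z := by
    have hsq := hl.add_mul_eq_zero Y Z X
    have hsq' := hr.mul_add_eq_zero X Y Z
    rw [map_add, LinearMap.add_apply] at hsq
    rw [map_add] at hsq'
    simp only [symmProd_apply, skewProd_apply, map_smul, map_sub]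
    linear_combination (norm := module)
      (2⁻¹ * 2⁻¹ : K) • (2 • mul_mul_add_mul_mul_eq_zero hl hr X Y Z - hsq - hsq')

namespace PolarVanishing

variable [NeZero (2 : K)]

theorem mul_symmProd_eq_zero (h : PolarVanishing mul) (X Y Z : A) : mul X (symmProd mul Y Z) = 0 := by
  rw [← symmProd_add_skewProd, h.symmProd_symmProd, h.skewProd_symmProd, add_zero]

theorem symmProd_mul_eq_zero (h : PolarVanishing mul) (X Y Z : A) : mul (symmProd mul Y Z) X = 0 := by
  rw [← symmProd_sub_skewProd, h.symmProd_symmProd, h.skewProd_symmProd, sub_zero]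

theorem mul_mul_eq_skewProd_skewProd (h : PolarVanishing mul) (X Y Z : A) :
    mul X (mul Y Z) = skewProd mul X (skewProd mul Y Z) := by
  rw [← symmProd_add_skewProd mul Y Z, map_add, h.mul_symmProd_eq_zero, zero_add,
    ← symmProd_add_skewProd, h.symmProd_skewProd, zero_add]

theorem mul_mul_left_eq_skewProd_skewProd (h : PolarVanishing mul) (X Y Z : A) :
    mul (mul X Y) Z = skewProd mul (skewProd mul X Y) Z := by
  rw [← symmProd_add_skewProd mul X Y, map_add, LinearMap.add_apply, h.symmProd_mul_eq_zero, zero_add,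
    ← symmProd_add_skewProd, symmProd_comm, h.symmProd_skewProd, zero_add]

theorem isLeftLeibniz_iff (h : PolarVanishing mul) :
    IsLeftLeibniz mul ↔ IsLeftLeibniz (skewProd mul) := by
  simp only [IsLeftLeibniz, h.mul_mul_eq_skewProd_skewProd, h.mul_mul_left_eq_skewProd_skewProd]

theorem isRightLeibniz_iff (h : PolarVanishing mul) :
    IsRightLeibniz mul ↔ IsRightLeibniz (skewProd mul) := by
  simp only [IsRightLeibniz, h.mul_mul_eq_skewProd_skewProd, h.mul_mul_left_eq_skewProd_skewProd]

end PolarVanishing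

end LinearMap

open LinearMap

/-- Structure theorem: `(A, ∗)` is a symmetric Leibniz algebra iff its polarization
`(•, [ , ])` satisfies `X • (Y • Z) = 0`, the Jacobi identity for `[ , ]`,
`[X, Y • Z] = 0` and `X • [Y, Z] = 0` for all `X, Y, Z`. -/
theorem stmt_13 {K A : Type*} [Field K] [CharZero K] [AddCommGroup A] [Module K A]
    (mul : A →ₗ[K] A →ₗ[K] A)
    (dot br : A → A → A)
    (hdot : ∀ X Y : A, dot X Y = (2 : K)⁻¹ • (mul X Y + mul Y X))
    (hbr : ∀ X Y : A, br X Y = (2 : K)⁻¹ • (mul X Y - mul Y X)) :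
    ((∀ X Y Z : A, mul X (mul Y Z) = mul (mul X Y) Z + mul Y (mul X Z)) ∧
     (∀ X Y Z : A, mul (mul Y Z) X = mul (mul Y X) Z + mul Y (mul Z X))) ↔
    ((∀ X Y Z : A, dot X (dot Y Z) = 0) ∧
     (∀ X Y Z : A, br (br X Y) Z + br (br Y Z) X + br (br Z X) Y = 0) ∧
     (∀ X Y Z : A, br X (dot Y Z) = 0) ∧
     (∀ X Y Z : A, dot X (br Y Z) = 0)) := by
  obtain rfl : dot = fun X Y => symmProd mul X Y := funext₂ hdot
  obtain rfl : br = fun X Y => skewProd mul X Y := funext₂ hbr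
  have hanti := skewProd_anticomm mul
  change IsLeftLeibniz mul ∧ IsRightLeibniz mul ↔ _ ∧ IsJacobi (skewProd mul) ∧ _
  constructor
  · rintro ⟨hl, hr⟩
    have hP := hl.polarVanishing hr
    exact ⟨hP.symmProd_symmProd,
      (isLeftLeibniz_iff_isJacobi hanti).1 (hP.isLeftLeibniz_iff.1 hl),
      hP.skewProd_symmProd, hP.symmProd_skewProd⟩
  · rintro ⟨hss, hJ, hks, hsk⟩
    have hP : PolarVanishing mul := ⟨hss, hks, hsk⟩
    exact ⟨hP.isLeftLeibniz_iff.2 ((isLeftLeibniz_iff_isJacobi hanti).2 hJ),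
      hP.isRightLeibniz_iff.2 ((isRightLeibniz_iff_isJacobi hanti).2 hJ)⟩
end

section
/- Let (A,∗) be a symmetric Leibniz algebra over a field K of characteristic 0 and let [X,Y] = (X∗Y − Y∗X)/2 be its polarized skew-symmetric product. Then the Leibniz identity between [ , ] and ∗ holds: [X∗Y, Z] − X∗[Y,Z] − [X,Z]∗Y = 0 for all X,Y,Z ∈ A. -/
/-! In a symmetric Leibniz algebra every product `U ∗ W` anticommutes with every element, and
left multiplication annihilates symmetrised products `X ∗ Z + Z ∗ X`. Together with the left
Leibniz identity for the pairs `(Y, Z)` and `(Z, Y)`, these two facts make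
`[X ∗ Y, Z] − X ∗ [Y, Z] − [X, Z] ∗ Y` a linear combination of the defining identities, already
before the factor `1/2` of the polarisation is applied. -/

section SymmetricLeibniz

variable {R M : Type*} [CommSemiring R] [AddCommGroup M] [Module R M]

theorem mul_mul_add_mul_mul_eq_zero (mul : M →ₗ[R] M →ₗ[R] M)
    (hL1 : ∀ X Y Z : M, mul X (mul Y Z) = mul (mul X Y) Z + mul Y (mul X Z))
    (hL2 : ∀ X Y Z : M, mul (mul Y Z) X = mul (mul Y X) Z + mul Y (mul Z X)) (U W V : M) :
    mul (mul U W) V + mul V (mul U W) = 0 := by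
  linear_combination (norm := abel) -hL1 U V W - hL2 W U V

theorem mul_apply_mul_add_mul_swap_eq_zero (mul : M →ₗ[R] M →ₗ[R] M)
    (hL2 : ∀ X Y Z : M, mul (mul Y Z) X = mul (mul Y X) Z + mul Y (mul Z X)) (X Y Z : M) :
    mul Y (mul X Z + mul Z X) = 0 := by
  rw [map_add]
  linear_combination (norm := abel) -hL2 Z Y X - hL2 X Y Z

theorem commutator_leibniz (mul : M →ₗ[R] M →ₗ[R] M)
    (hL1 : ∀ X Y Z : M, mul X (mul Y Z) = mul (mul X Y) Z + mul Y (mul X Z))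
    (hL2 : ∀ X Y Z : M, mul (mul Y Z) X = mul (mul Y X) Z + mul Y (mul Z X)) (X Y Z : M) :
    (mul (mul X Y) Z - mul Z (mul X Y)) - mul X (mul Y Z - mul Z Y)
      - mul (mul X Z - mul Z X) Y = 0 := by
  have hZXY := mul_mul_add_mul_mul_eq_zero mul hL1 hL2 Z X Y
  have hYXZ := mul_apply_mul_add_mul_swap_eq_zero mul hL2 X Y Z
  simp only [map_add, map_sub, LinearMap.sub_apply] at hYXZ ⊢
  linear_combination (norm := abel) hL1 X Z Y - hL1 X Y Z + hZXY - hYXZ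

end SymmetricLeibniz

theorem stmt_14_general {K A : Type*} [Field K] [AddCommGroup A] [Module K A]
    (mul : A →ₗ[K] A →ₗ[K] A)
    (hL1 : ∀ X Y Z : A, mul X (mul Y Z) = mul (mul X Y) Z + mul Y (mul X Z))
    (hL2 : ∀ X Y Z : A, mul (mul Y Z) X = mul (mul Y X) Z + mul Y (mul Z X))
    (br : A → A → A)
    (hbr : ∀ X Y : A, br X Y = (2 : K)⁻¹ • (mul X Y - mul Y X)) :
    ∀ X Y Z : A, br (mul X Y) Z - mul X (br Y Z) - mul (br X Z) Y = 0 := by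
  intro X Y Z
  simp only [hbr, map_smul, LinearMap.smul_apply, ← smul_sub,
    commutator_leibniz mul hL1 hL2 X Y Z, smul_zero]

/-- For a symmetric Leibniz algebra, the Leibniz identity between the polarized
bracket `[ , ]` and `∗` holds: `[X∗Y, Z] − X∗[Y,Z] − [X,Z]∗Y = 0`. -/
theorem stmt_14 {K A : Type*} [Field K] [CharZero K] [AddCommGroup A] [Module K A]
    (mul : A →ₗ[K] A →ₗ[K] A)
    (hL1 : ∀ X Y Z : A, mul X (mul Y Z) = mul (mul X Y) Z + mul Y (mul X Z))
    (hL2 : ∀ X Y Z : A, mul (mul Y Z) X = mul (mul Y X) Z + mul Y (mul Z X))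
    (br : A → A → A)
    (hbr : ∀ X Y : A, br X Y = (2 : K)⁻¹ • (mul X Y - mul Y X)) :
    ∀ X Y Z : A, br (mul X Y) Z - mul X (br Y Z) - mul (br X Z) Y = 0 :=
  stmt_14_general mul hL1 hL2 br hbr
end
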